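/- arXiv:2410.12735 — 3 statements merged into one kernel-verified Lean document; each statement's English description precedes it below -/
import Mathlib

section
/- Let Θ and Z be nonempty types and L : Θ × Z → ℝ a function satisfying L(θ, z) ≥ 0 for all θ ∈ Θ and z ∈ Z. Suppose (θ_t)_{t≥0} is a sequence in Θ and (z_t)_{t≥1} a sequence in Z such that for every t ≥ 0: (i) L(θ_t, z_{t+1}) ≤ L(θ_t, z) for all z ∈ Z (preference-labeling step), and (ii) L(θ_{t+1}, z_{t+1}) ≤ L(θ, z_{t+1}) for all θ ∈ Θ (learning step). Then the sequence (L(θ_t, z_t))_{t≥1} converges, i.e., there exists ℓ ∈ ℝ with L(θ_t, z_t) → ℓ as t → ∞. -/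
theorem two_step_optimization_converges
    {Θ Z : Type*} [Nonempty Θ] [Nonempty Z]
    (L : Θ × Z → ℝ)
    (hL : ∀ θ : Θ, ∀ z : Z, 0 ≤ L (θ, z))
    (θ : ℕ → Θ) (z : ℕ → Z)
    (hlabel : ∀ t : ℕ, ∀ z' : Z, L (θ t, z (t + 1)) ≤ L (θ t, z'))
    (hlearn : ∀ t : ℕ, ∀ θ' : Θ, L (θ (t + 1), z (t + 1)) ≤ L (θ', z (t + 1))) :
    ∃ ℓ : ℝ, Filter.Tendsto (fun t : ℕ => L (θ (t + 1), z (t + 1)))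
      Filter.atTop (nhds ℓ) := by
  have hanti : Antitone (fun t : ℕ => L (θ (t + 1), z (t + 1))) := by
    apply antitone_nat_of_succ_le
    intro t
    calc L (θ (t + 2), z (t + 2)) ≤ L (θ (t + 1), z (t + 2)) := hlearn (t + 1) _
      _ ≤ L (θ (t + 1), z (t + 1)) := hlabel (t + 1) _
  have hbdd : BddBelow (Set.range fun t : ℕ => L (θ (t + 1), z (t + 1))) :=
    ⟨0, by rintro x ⟨t, rfl⟩; exact hL _ _⟩
  exact ⟨_, tendsto_atTop_ciInf hanti hbdd⟩
end

section
/- Let σ denote the logistic sigmoid σ(x) = 1/(1 + exp(−x)), and for Δ ∈ ℝ define the regularization loss L_reg(Δ) = −log σ(Δ) − log σ(−Δ). For p ∈ (0,1), let KL(u ‖ Ber(p)) = (1/2)·log((1/2)/p) + (1/2)·log((1/2)/(1−p)) denote the KL divergence from the Bernoulli(p) distribution to the uniform binary distribution u. Then for every Δ ∈ ℝ, L_reg(Δ) = 2·KL(u ‖ Ber(σ(Δ))) + 2·log 2. -/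
noncomputable def sigmoid (x : ℝ) : ℝ := 1 / (1 + Real.exp (-x))

noncomputable def regLoss (Δ : ℝ) : ℝ :=
  -Real.log (sigmoid Δ) - Real.log (sigmoid (-Δ))

/-- KL divergence from Bernoulli(p) to the uniform binary distribution. -/
noncomputable def klUnifBer (p : ℝ) : ℝ :=
  (1 / 2) * Real.log ((1 / 2) / p) + (1 / 2) * Real.log ((1 / 2) / (1 - p))

lemma sigmoid_pos (x : ℝ) : 0 < sigmoid x := by
  unfold sigmoid
  positivity

lemma one_sub_sigmoid (x : ℝ) : 1 - sigmoid x = sigmoid (-x) := by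
  unfold sigmoid
  have h1 : (0:ℝ) < 1 + Real.exp (-x) := by positivity
  have h2 : (0:ℝ) < 1 + Real.exp x := by positivity
  rw [neg_neg]
  field_simp
  have h3 : Real.exp (-x) * Real.exp x = 1 := by rw [← Real.exp_add]; simp
  linear_combination h3

theorem regLoss_eq_two_KL (Δ : ℝ) :
    regLoss Δ = 2 * klUnifBer (sigmoid Δ) + 2 * Real.log 2 := by
  have h1 := sigmoid_pos Δ
  have h2 := sigmoid_pos (-Δ)
  unfold regLoss klUnifBer
  rw [show (1:ℝ) - sigmoid Δ = sigmoid (-Δ) from one_sub_sigmoid Δ]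
  rw [Real.log_div (by norm_num) (ne_of_gt h1), Real.log_div (by norm_num) (ne_of_gt h2),
    Real.log_div (by norm_num) (by norm_num : (2:ℝ) ≠ 0), Real.log_one]
  ring
end

section
/- Let σ denote the logistic sigmoid σ(x) = 1/(1 + exp(−x)); for Δ ∈ ℝ and z ∈ {0,1} let ℓ(Δ, z) = −z·log σ(Δ) − (1−z)·log σ(−Δ), and let L_reg(Δ) = −log σ(Δ) − log σ(−Δ). Then for every Δ ∈ ℝ, every z ∈ {0,1}, and every λ ≥ 0, with C_λ = (1+λ)/(1+2λ): ℓ(Δ, z) + λ·L_reg(Δ) = (1 + 2λ)·( C_λ·ℓ(Δ, z) + (1 − C_λ)·ℓ(Δ, 1−z) ). -/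
noncomputable def dpoLoss (Δ z : ℝ) : ℝ :=
  -z * Real.log (sigmoid Δ) - (1 - z) * Real.log (sigmoid (-Δ))

theorem dpo_plus_reg_eq_soft_labeled_dpo
    (Δ : ℝ) (z : ℝ) (hz : z ∈ ({0, 1} : Set ℝ)) (lam : ℝ) (hlam : 0 ≤ lam) :
    dpoLoss Δ z + lam * regLoss Δ =
      (1 + 2 * lam) *
        ((1 + lam) / (1 + 2 * lam) * dpoLoss Δ z +
          (1 - (1 + lam) / (1 + 2 * lam)) * dpoLoss Δ (1 - z)) := by
  have h : (1 + 2 * lam) ≠ 0 := by linarith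
  rcases hz with rfl | rfl <;> simp [dpoLoss, regLoss] <;> field_simp <;> ring
end
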